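/- arXiv:2406.01991 — 5 statements merged into one kernel-verified Lean document; each statement's English description precedes it below -/
import Mathlib

section
/- Let P be an idempotent n×n real matrix, Q = I − P, L an n×n real matrix, and u₀ ∈ ℝⁿ. Define the noise term N(τ) = exp(τ·QL)·Q·L·u₀ and the memory kernel M(τ) = P·L·N(τ). Then for every τ ∈ ℝ: N(τ) = exp(τL)·N(0) − ∫_0^τ exp((τ−s)L)·M(s) ds. -/
/-! Duhamel's formula: `s ↦ exp ((τ - s) • L) * exp (s • A)` has derivative
`exp ((τ - s) • L) * (A - L) * exp (s • A)`, so integrating over `[0, τ]` gives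
`exp (τ • A) = exp (τ • L) + ∫_0^τ exp ((τ - s) • L) * (A - L) * exp (s • A)`.
For `A = Q * L` one has `A - L = -(P * L)`, and applying both sides to `Q L u₀` gives the identity.
Matrices are transported to the Banach algebra of continuous endomorphisms of `n → ℝ`, so that the
integral never needs a norm on matrices. -/

open MeasureTheory intervalIntegral NormedSpace

section Duhamel

variable {𝔸 : Type*} [NormedRing 𝔸] [NormedAlgebra ℝ 𝔸] [CompleteSpace 𝔸]

theorem hasDerivAt_exp_smul_sub_mul_exp_smul (A B : 𝔸) (τ s : ℝ) :
    HasDerivAt (fun u : ℝ => exp ((τ - u) • B) * exp (u • A))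
      (exp ((τ - s) • B) * (A - B) * exp (s • A)) s := by
  have hB : HasDerivAt (fun u : ℝ => exp ((τ - u) • B)) (-(exp ((τ - s) • B) * B)) s :=
    (hasDerivAt_exp_smul_const B (τ - s)).comp_const_sub τ s
  refine (hB.mul (hasDerivAt_exp_smul_const' A s)).congr_deriv ?_
  noncomm_ring

theorem continuous_exp_smul_sub_mul_mul_exp_smul (A B C : 𝔸) (τ : ℝ) :
    Continuous fun s : ℝ => exp ((τ - s) • B) * C * exp (s • A) := by
  have hA := (differentiable_exp_smul_const ℝ A).continuous
  have hB := (differentiable_exp_smul_const ℝ B).continuous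
  exact ((hB.comp (continuous_sub_left τ)).mul continuous_const).mul hA

theorem exp_smul_eq_exp_smul_add_integral (A B : 𝔸) (τ : ℝ) :
    exp (τ • A) = exp (τ • B) +
      ∫ s in (0 : ℝ)..τ, exp ((τ - s) • B) * (A - B) * exp (s • A) := by
  rw [integral_eq_sub_of_hasDerivAt (fun s _ => hasDerivAt_exp_smul_sub_mul_exp_smul A B τ s)
    ((continuous_exp_smul_sub_mul_mul_exp_smul A B (A - B) τ).intervalIntegrable 0 τ)]
  simp

end Duhamel

namespace Matrix

variable (𝕜 : Type*) {n : Type*} [RCLike 𝕜] [Fintype n] [DecidableEq n]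

noncomputable def toContinuousLinearMapAlgEquiv : Matrix n n 𝕜 ≃ₐ[𝕜] ((n → 𝕜) →L[𝕜] (n → 𝕜)) :=
  toLinAlgEquiv'.trans (Module.End.toContinuousLinearMap (n → 𝕜))

variable {𝕜}

@[simp]
theorem toContinuousLinearMapAlgEquiv_apply (M : Matrix n n 𝕜) (v : n → 𝕜) :
    toContinuousLinearMapAlgEquiv 𝕜 M v = M *ᵥ v := rfl

theorem exp_toContinuousLinearMapAlgEquiv (M : Matrix n n 𝕜) :
    exp (toContinuousLinearMapAlgEquiv 𝕜 M) = toContinuousLinearMapAlgEquiv 𝕜 (exp M) := by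
  open scoped Norms.Operator in
  exact (map_exp (toContinuousLinearMapAlgEquiv 𝕜 (n := n))
    (toContinuousLinearMapAlgEquiv 𝕜).toLinearMap.continuous_of_finiteDimensional M).symm

theorem exp_smul_mulVec_eq_add_integral (A B : Matrix n n ℝ) (τ : ℝ) (v : n → ℝ) :
    exp (τ • A) *ᵥ v = exp (τ • B) *ᵥ v +
      ∫ s in (0 : ℝ)..τ, exp ((τ - s) • B) *ᵥ ((A - B) *ᵥ (exp (s • A) *ᵥ v)) := by
  have h := congr($(exp_smul_eq_exp_smul_add_integral
    (toContinuousLinearMapAlgEquiv ℝ A) (toContinuousLinearMapAlgEquiv ℝ B) τ) v)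
  rw [_root_.add_apply, ContinuousLinearMap.intervalIntegral_apply
    ((continuous_exp_smul_sub_mul_mul_exp_smul _ _ _ τ).intervalIntegrable 0 τ)] at h
  simpa only [← map_smul, ← map_sub, exp_toContinuousLinearMapAlgEquiv, ← map_mul,
    toContinuousLinearMapAlgEquiv_apply, mulVec_mulVec, mul_assoc] using h

end Matrix

open Matrix

theorem noise_term_integral_identity_general {n : ℕ} (P Q L : Matrix (Fin n) (Fin n) ℝ)
    (hQ : Q = 1 - P) (u₀ : Fin n → ℝ)
    (N M : ℝ → Fin n → ℝ)
    (hN : ∀ τ : ℝ, N τ = (NormedSpace.exp (τ • (Q * L)) * Q * L).mulVec u₀)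
    (hM : ∀ τ : ℝ, M τ = (P * L).mulVec (N τ)) :
    ∀ τ : ℝ,
      N τ = (NormedSpace.exp (τ • L)).mulVec (N 0) -
        ∫ s in (0:ℝ)..τ, (NormedSpace.exp ((τ - s) • L)).mulVec (M s) := by
  intro τ
  have hN' (s : ℝ) : N s = exp (s • (Q * L)) *ᵥ ((Q * L) *ᵥ u₀) := by
    rw [hN, mulVec_mulVec, mul_assoc]
  have hQL : Q * L - L = -(P * L) := by rw [hQ]; noncomm_ring
  rw [hN', exp_smul_mulVec_eq_add_integral (Q * L) L, hQL, hN' 0, zero_smul, exp_zero, one_mulVec]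
  simp only [hM, hN', neg_mulVec, mulVec_neg, intervalIntegral.integral_neg, sub_eq_add_neg]

/-- For an idempotent real `n × n` matrix `P`, `Q = I - P`, a real `n × n` matrix `L` and
`u₀ ∈ ℝⁿ`, the noise term `N τ = exp (τ Q L) Q L u₀` and the memory kernel
`M τ = P L N τ` of the Mori–Zwanzig decomposition satisfy
`N τ = exp (τ L) N 0 - ∫_0^τ exp ((τ - s) L) M s ds` for every `τ`. -/
theorem noise_term_integral_identity {n : ℕ} (P Q L : Matrix (Fin n) (Fin n) ℝ)
    (hP : P * P = P) (hQ : Q = 1 - P) (u₀ : Fin n → ℝ)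
    (N M : ℝ → Fin n → ℝ)
    (hN : ∀ τ : ℝ, N τ = (NormedSpace.exp (τ • (Q * L)) * Q * L).mulVec u₀)
    (hM : ∀ τ : ℝ, M τ = (P * L).mulVec (N τ)) :
    ∀ τ : ℝ,
      N τ = (NormedSpace.exp (τ • L)).mulVec (N 0) -
        ∫ s in (0:ℝ)..τ, (NormedSpace.exp ((τ - s) • L)).mulVec (M s) :=
  noise_term_integral_identity_general P Q L hQ u₀ N M hN hM
end

section
/- Let P be an idempotent n×n real matrix, Q = I − P, L an n×n real matrix, and u₀ ∈ ℝⁿ. The memory kernel M(τ) = P·L·exp(τ·QL)·Q·L·u₀ satisfies the Volterra integral equation: M(τ) + ∫_0^τ P·exp((τ−s)L)·L·M(s) ds = P·exp(τL)·L·Q·L·u₀ for all τ ∈ ℝ. -/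
/-!
Duhamel's formula `exp (τ A) - exp (τ B) = ∫₀^τ exp ((τ - s) A) (A - B) exp (s B) ds` follows by
differentiating `s ↦ exp ((τ - s) A) exp (s B)`. With `A = L` and `B = Q L` we have `A - B = P L`;
multiplying by `P L` on the left and applying to `Q L u₀` turns the two exponentials into the right-hand
side and `M τ`, and the integrand into `P exp ((τ - s) L) L (M s)` once `L` is commuted past
`exp ((τ - s) L)`.
-/

open MeasureTheory intervalIntegral NormedSpace

section Duhamel

variable {𝔸 : Type*} [NormedRing 𝔸] [NormedAlgebra ℝ 𝔸] [CompleteSpace 𝔸]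

theorem hasDerivAt_exp_const_sub_smul (A : 𝔸) (τ s : ℝ) :
    HasDerivAt (fun s : ℝ => exp ((τ - s) • A)) (-(exp ((τ - s) • A) * A)) s := by
  simpa [Function.comp_def] using
    (hasDerivAt_exp_smul_const A (τ - s)).scomp s ((hasDerivAt_id s).const_sub τ)

theorem continuous_exp_const_sub_smul_mul_mul_exp_smul (A B C : 𝔸) (τ : ℝ) :
    Continuous fun s : ℝ => exp ((τ - s) • A) * C * exp (s • B) :=
  (((differentiable_exp_smul_const ℝ A).continuous.comp (continuous_const.sub continuous_id)).mul
    continuous_const).mul (differentiable_exp_smul_const ℝ B).continuous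

theorem exp_smul_sub_exp_smul_eq_integral (A B : 𝔸) (τ : ℝ) :
    exp (τ • A) - exp (τ • B) =
      ∫ s in (0 : ℝ)..τ, exp ((τ - s) • A) * (A - B) * exp (s • B) := by
  have hderiv : ∀ s : ℝ, HasDerivAt (fun s : ℝ => exp ((τ - s) • A) * exp (s • B))
      (-(exp ((τ - s) • A) * (A - B) * exp (s • B))) s := fun s => by
    refine ((hasDerivAt_exp_const_sub_smul A τ s).mul
      (hasDerivAt_exp_smul_const' B s)).congr_deriv ?_
    noncomm_ring
  have hint := (continuous_exp_const_sub_smul_mul_mul_exp_smul A B (A - B) τ).neg.intervalIntegrable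
    (μ := volume) 0 τ
  rw [← neg_sub, ← neg_neg (∫ s in (0 : ℝ)..τ, _), ← intervalIntegral.integral_neg,
    integral_eq_sub_of_hasDerivAt (fun s _ => hderiv s) hint]
  simp [exp_zero]

end Duhamel

open scoped Matrix

namespace Matrix

variable {m : Type*} [Fintype m] [DecidableEq m]

theorem mulVec_exp_smul_sub_mulVec_exp_smul (A B C : Matrix m m ℝ) (w : m → ℝ) (τ : ℝ) :
    (C * exp (τ • A)) *ᵥ w - (C * exp (τ • B)) *ᵥ w =
      ∫ s in (0 : ℝ)..τ, (C * exp ((τ - s) • A) * (A - B) * exp (s • B)) *ᵥ w := by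
  -- Matrices carry no global norm; the statement involves none, so any one will do.
  let _ : NormedRing (Matrix m m ℝ) := Matrix.linftyOpNormedRing
  let _ : NormedAlgebra ℝ (Matrix m m ℝ) := Matrix.linftyOpNormedAlgebra
  let Φ : Matrix m m ℝ →L[ℝ] (m → ℝ) :=
    (LinearMap.applyₗ w ∘ₗ Matrix.toLin'.toLinearMap ∘ₗ LinearMap.mulLeft ℝ C).toContinuousLinearMap
  have hΦ : ∀ X, Φ X = (C * X) *ᵥ w := fun _ => rfl
  have hint := (continuous_exp_const_sub_smul_mul_mul_exp_smul A B (A - B) τ).intervalIntegrable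
    (μ := volume) 0 τ
  rw [← hΦ, ← hΦ, ← map_sub]
  refine (congrArg Φ (exp_smul_sub_exp_smul_eq_integral A B τ)).trans ?_
  exact (Φ.intervalIntegral_comp_comm hint).symm.trans
    (integral_congr fun s _ => (hΦ _).trans (by simp only [Matrix.mul_assoc]; rfl))

end Matrix

theorem memory_kernel_volterra_equation_general {n : ℕ} (P Q L : Matrix (Fin n) (Fin n) ℝ)
    (hQ : Q = 1 - P) (u₀ : Fin n → ℝ)
    (M : ℝ → Fin n → ℝ)
    (hM : ∀ τ : ℝ, M τ = (P * L * NormedSpace.exp (τ • (Q * L)) * Q * L).mulVec u₀) :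
    ∀ τ : ℝ,
      M τ + (∫ s in (0:ℝ)..τ, (P * NormedSpace.exp ((τ - s) • L) * L).mulVec (M s)) =
        (P * NormedSpace.exp (τ • L) * L * Q * L).mulVec u₀ := by
  intro τ
  set w := (Q * L) *ᵥ u₀
  have hPL : L - Q * L = P * L := by rw [hQ]; noncomm_ring
  have hLexp : ∀ t : ℝ, L * exp (t • L) = exp (t • L) * L := fun t =>
    ((Commute.refl L).smul_right t).exp_right
  have hMw : ∀ s : ℝ, M s = (P * L * exp (s • (Q * L))) *ᵥ w := fun s => by
    simp only [hM s, w, Matrix.mulVec_mulVec, Matrix.mul_assoc]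
  have hRHS : (P * exp (τ • L) * L * Q * L) *ᵥ u₀ = (P * L * exp (τ • L)) *ᵥ w := by
    simp only [w, Matrix.mulVec_mulVec, Matrix.mul_assoc, hLexp]
  have hintegrand : ∀ s : ℝ, (P * exp ((τ - s) • L) * L) *ᵥ M s =
      (P * L * exp ((τ - s) • L) * (L - Q * L) * exp (s • (Q * L))) *ᵥ w := fun s => by
    simp only [hMw s, hPL, Matrix.mulVec_mulVec, Matrix.mul_assoc, hLexp]
  rw [hRHS, integral_congr fun s _ => hintegrand s,
    ← Matrix.mulVec_exp_smul_sub_mulVec_exp_smul, hMw τ]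
  abel

/-- **Volterra integral equation for the memory kernel**: for an idempotent real `n × n`
matrix `P`, `Q = I - P`, a real `n × n` matrix `L` and `u₀ ∈ ℝⁿ`, the memory kernel
`M τ = P L exp (τ Q L) Q L u₀` of the Mori–Zwanzig decomposition satisfies
`M τ + ∫_0^τ P exp ((τ - s) L) L (M s) ds = P exp (τ L) L Q L u₀` for all `τ`. -/
theorem memory_kernel_volterra_equation {n : ℕ} (P Q L : Matrix (Fin n) (Fin n) ℝ)
    (hP : P * P = P) (hQ : Q = 1 - P) (u₀ : Fin n → ℝ)
    (M : ℝ → Fin n → ℝ)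
    (hM : ∀ τ : ℝ, M τ = (P * L * NormedSpace.exp (τ • (Q * L)) * Q * L).mulVec u₀) :
    ∀ τ : ℝ,
      M τ + (∫ s in (0:ℝ)..τ, (P * NormedSpace.exp ((τ - s) • L) * L).mulVec (M s)) =
        (P * NormedSpace.exp (τ • L) * L * Q * L).mulVec u₀ :=
  memory_kernel_volterra_equation_general P Q L hQ u₀ M hM
end

section
/- Let E, F be real normed vector spaces, h : E → E, and u : ℝ × E → F a Fréchet differentiable solution of the Liouville equation with control: ∂u/∂t(t, z) = D_z u(t, z)[h(z)] for all (t, z), with initial datum u(0, ·) = u₀. Let Φ : ℝ → E → E satisfy Φ(0, z) = z and, for each z, s ↦ Φ(s, z) has derivative h(Φ(s, z)) at every s. Then the solution is given along characteristics by the representation formula u(t, z) = u₀(Φ(t, z)) for all t and z. In particular, if u₀(z) = z then u(t, z) = Φ(t, z), i.e., the Liouville equation with control is equivalent to the Cauchy problem for the Langevin equation dΦ/dt = h(Φ), Φ(0) = z. -/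
/-! The map `s ↦ u (t - s, γ s)` along a characteristic curve `γ' = h ∘ γ` has derivative
`-∂ₜu + D_z u [h] = 0` by the chain rule and the Liouville equation, so it is constant;
comparing `s = 0` with `s = t` gives `u (t, γ 0) = u (0, γ t)`. -/

section Partials

variable {𝕜 E F : Type*} [NontriviallyNormedField 𝕜] [NormedAddCommGroup E] [NormedSpace 𝕜 E]
  [NormedAddCommGroup F] [NormedSpace 𝕜 F] {u : 𝕜 × E → F} {p : 𝕜 × E}

theorem DifferentiableAt.fderiv_apply_eq_deriv_add_fderiv (hu : DifferentiableAt 𝕜 u p)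
    (a : 𝕜) (w : E) :
    fderiv 𝕜 u p (a, w) =
      a • deriv (fun s => u (s, p.2)) p.1 + fderiv 𝕜 (fun w => u (p.1, w)) p.2 w := by
  have hfst : deriv (fun s => u (s, p.2)) p.1 = fderiv 𝕜 u p (1, 0) :=
    (hu.hasFDerivAt.comp_hasDerivAt p.1
      ((hasDerivAt_id p.1).prodMk (hasDerivAt_const p.1 p.2))).deriv
  have hsnd : fderiv 𝕜 (fun w => u (p.1, w)) p.2 = (fderiv 𝕜 u p).comp (.inr 𝕜 𝕜 E) :=
    (hu.hasFDerivAt.comp p.2 (hasFDerivAt_prodMk_right p.1 p.2)).fderiv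
  have hsplit : ((a, w) : 𝕜 × E) = a • ((1 : 𝕜), (0 : E)) + ((0 : 𝕜), w) := by simp
  rw [hfst, hsnd, hsplit, map_add, map_smul]
  simp

end Partials

section Characteristics

variable {E F : Type*} [NormedAddCommGroup E] [NormedSpace ℝ E]
  [NormedAddCommGroup F] [NormedSpace ℝ F] {h : E → E} {u : ℝ × E → F} {γ : ℝ → E}

def SolvesLiouville (h : E → E) (u : ℝ × E → F) : Prop :=
  ∀ (t : ℝ) (z : E), deriv (fun s => u (s, z)) t = fderiv ℝ (fun w => u (t, w)) z (h z)

theorem hasDerivAt_zero_along_characteristic (hu : Differentiable ℝ u)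
    (hliouville : SolvesLiouville h u) (hγ : ∀ s, HasDerivAt γ (h (γ s)) s) (t s : ℝ) :
    HasDerivAt (fun s => u (t - s, γ s)) 0 s := by
  have hchain := (hu (t - s, γ s)).hasFDerivAt.comp_hasDerivAt s
    (((hasDerivAt_id s).const_sub t).prodMk (hγ s))
  have hzero : fderiv ℝ u (t - s, γ s) (-1, h (γ s)) = 0 := by
    rw [(hu _).fderiv_apply_eq_deriv_add_fderiv, hliouville]
    simp
  simpa [hzero, Function.comp_def] using hchain

theorem apply_eq_apply_zero_along_characteristic (hu : Differentiable ℝ u)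
    (hliouville : SolvesLiouville h u) (hγ : ∀ s, HasDerivAt γ (h (γ s)) s) (t : ℝ) :
    u (t, γ 0) = u (0, γ t) := by
  have hderiv := hasDerivAt_zero_along_characteristic hu hliouville hγ t
  simpa using is_const_of_deriv_eq_zero (fun s => (hderiv s).differentiableAt)
    (fun s => (hderiv s).deriv) 0 t

end Characteristics

/-- **Representation along characteristics**: if `u : ℝ × E → F` is a Fréchet differentiable
solution of the Liouville equation with control `∂u/∂t (t, z) = D_z u (t, z) [h z]` with
initial datum `u (0, ·) = u₀`, and `Φ` satisfies `Φ 0 z = z` and `∂Φ/∂s (s, z) = h (Φ s z)`,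
then `u (t, z) = u₀ (Φ t z)`. In particular, for a solution `v : ℝ × E → E` with initial
datum `v (0, z) = z`, one has `v (t, z) = Φ t z`: the Liouville equation with control is
equivalent to the Cauchy problem for the Langevin equation `dΦ/dt = h (Φ)`, `Φ 0 = z`. -/
theorem liouville_solution_representation_formula
    {E F : Type*} [NormedAddCommGroup E] [NormedSpace ℝ E]
    [NormedAddCommGroup F] [NormedSpace ℝ F]
    (h : E → E) (u : ℝ × E → F) (u₀ : E → F)
    (hu : Differentiable ℝ u)
    (hliouville : ∀ (t : ℝ) (z : E),
      deriv (fun s : ℝ => u (s, z)) t = fderiv ℝ (fun w : E => u (t, w)) z (h z))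
    (hinit : ∀ z : E, u (0, z) = u₀ z)
    (Φ : ℝ → E → E)
    (hΦ0 : ∀ z : E, Φ 0 z = z)
    (hΦ : ∀ (z : E) (s : ℝ), HasDerivAt (fun s : ℝ => Φ s z) (h (Φ s z)) s)
    (v : ℝ × E → E)
    (hv : Differentiable ℝ v)
    (hliouville' : ∀ (t : ℝ) (z : E),
      deriv (fun s : ℝ => v (s, z)) t = fderiv ℝ (fun w : E => v (t, w)) z (h z))
    (hinit' : ∀ z : E, v (0, z) = z) :
    (∀ (t : ℝ) (z : E), u (t, z) = u₀ (Φ t z)) ∧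
      ∀ (t : ℝ) (z : E), v (t, z) = Φ t z := by
  constructor
  · intro t z
    rw [← hinit, ← apply_eq_apply_zero_along_characteristic hu hliouville (hΦ z), hΦ0]
  · intro t z
    rw [← hinit' (Φ t z), ← apply_eq_apply_zero_along_characteristic hv hliouville' (hΦ z), hΦ0]
end

section
/- Let Λ be a real n×n matrix and Δτ > 0 a step size such that I + (Δτ/2)Λ is invertible, and let M̂₀ ∈ ℝⁿ. Define M̂_n = exp(n·Δτ·Λ)·M(Λ)^n·M̂₀ for n ≥ 0. Then this sequence satisfies the discretized Volterra memory equation: for every integer n ≥ 1, M̂_n = (I + (Δτ/2)Λ)⁻¹·( exp(n·Δτ·Λ)·(I − (Δτ/2)Λ)·M̂₀ − Δτ·Λ·Σ_{k=1}^{n−1} exp((n−k)·Δτ·Λ)·M̂_k ). -/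
/-!
With `A = I + (Δτ/2)Λ`, the propagator `M = I - Δτ Λ A⁻¹` satisfies `A M = A - Δτ Λ`, since `Λ`
commutes with `A`. Iterating gives the telescoping identity
`A Mⁿ = A - Δτ Λ ∑_{k<n} Mᵏ = (I - (Δτ/2)Λ) - Δτ Λ ∑_{k=1}^{n-1} Mᵏ`.
Multiplying by `exp (n Δτ Λ)`, which commutes with `A` and `Λ`, and splitting it as
`exp ((n-k) Δτ Λ) exp (k Δτ Λ)` inside the sum gives the Volterra equation.
-/

open Finset Matrix NormedSpace

theorem mul_pow_eq_sub_mul_sum_range {R : Type*} [Ring R] {A M L : R} (h : A * M = A - L)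
    (n : ℕ) : A * M ^ n = A - L * ∑ k ∈ range n, M ^ k := by
  induction n with
  | zero => simp
  | succ n ih =>
    calc A * M ^ (n + 1) = (A * M) * M ^ n := by rw [mul_assoc, ← pow_succ']
      _ = A * M ^ n - L * M ^ n := by rw [h, sub_mul]
      _ = A - L * ∑ k ∈ range (n + 1), M ^ k := by
        rw [ih, sum_range_succ, mul_add]; abel

theorem mul_pow_eq_sub_sub_mul_sum_Ico {R : Type*} [Ring R] {A M L : R} (h : A * M = A - L)
    {n : ℕ} (hn : 0 < n) : A * M ^ n = (A - L) - L * ∑ k ∈ Ico 1 n, M ^ k := by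
  rw [mul_pow_eq_sub_mul_sum_range h, sum_range_eq_add_Ico _ hn, pow_zero, mul_add, mul_one,
    sub_sub]

theorem commute_one_add_smul_self {R 𝔸 : Type*} [CommSemiring R] [Semiring 𝔸] [Algebra R 𝔸]
    (x : 𝔸) (b : R) : Commute x (1 + b • x) :=
  (Commute.one_right x).add_right ((Commute.refl x).smul_right b)

namespace Matrix

variable {ι 𝕜 : Type*} [Fintype ι] [DecidableEq ι]

theorem mul_one_sub_mul_nonsing_inv [CommRing 𝕜] {A L : Matrix ι ι 𝕜} (hA : IsUnit A)
    (hLA : Commute L A) : A * (1 - L * A⁻¹) = A - L := by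
  rw [mul_sub, mul_one, ← mul_assoc, ← hLA.eq, mul_assoc,
    mul_nonsing_inv A ((isUnit_iff_isUnit_det A).mp hA), mul_one]

theorem one_add_half_smul_mul_pow [Field 𝕜] [NeZero (2 : 𝕜)] {Λ : Matrix ι ι 𝕜} {Δτ : 𝕜}
    (hinv : IsUnit (1 + (Δτ / 2) • Λ)) {n : ℕ} (hn : 0 < n) :
    (1 + (Δτ / 2) • Λ) * (1 - Δτ • (Λ * (1 + (Δτ / 2) • Λ)⁻¹)) ^ n =
      (1 - (Δτ / 2) • Λ) - Δτ • (Λ * ∑ k ∈ Ico 1 n, (1 - Δτ • (Λ * (1 + (Δτ / 2) • Λ)⁻¹)) ^ k) := by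
  have hstep :=
    mul_one_sub_mul_nonsing_inv hinv ((commute_one_add_smul_self Λ (Δτ / 2)).smul_left Δτ)
  rw [← smul_mul_assoc, mul_pow_eq_sub_sub_mul_sum_Ico hstep hn, ← smul_mul_assoc]
  congr 1
  rw [← add_halves Δτ, add_smul, add_div, add_halves]
  abel

theorem exp_sub_smul_mul_exp_smul [RCLike 𝕜] (Λ : Matrix ι ι 𝕜) (s t : 𝕜) :
    exp ((s - t) • Λ) * exp (t • Λ) = exp (s • Λ) := by
  rw [← exp_add_of_commute _ _ (((Commute.refl Λ).smul_left _).smul_right _), ← add_smul,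
    sub_add_cancel]

end Matrix

theorem explicit_sequence_satisfies_discretized_volterra_general {d : ℕ}
    (Λ : Matrix (Fin d) (Fin d) ℝ) (Δτ : ℝ)
    (hinv : IsUnit ((1 : Matrix (Fin d) (Fin d) ℝ) + (Δτ / 2) • Λ))
    (M : Matrix (Fin d) (Fin d) ℝ)
    (hM : M = (1 : Matrix (Fin d) (Fin d) ℝ) -
        Δτ • (Λ * ((1 : Matrix (Fin d) (Fin d) ℝ) + (Δτ / 2) • Λ)⁻¹))
    (M₀ : Fin d → ℝ) (Mhat : ℕ → Fin d → ℝ)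
    (hMhat : ∀ n : ℕ,
      Mhat n = (NormedSpace.exp (((n : ℝ) * Δτ) • Λ) * M ^ n).mulVec M₀) :
    ∀ n : ℕ, 1 ≤ n →
      Mhat n =
        (((1 : Matrix (Fin d) (Fin d) ℝ) + (Δτ / 2) • Λ)⁻¹).mulVec
          ((NormedSpace.exp (((n : ℝ) * Δτ) • Λ) *
              ((1 : Matrix (Fin d) (Fin d) ℝ) - (Δτ / 2) • Λ)).mulVec M₀ -
            Δτ • Λ.mulVec
              (∑ k ∈ Finset.Ico 1 n,
                (NormedSpace.exp ((((n : ℝ) - (k : ℝ)) * Δτ) • Λ)).mulVec (Mhat k))) := by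
  intro n hn
  set A : Matrix (Fin d) (Fin d) ℝ := 1 + (Δτ / 2) • Λ
  set E := exp (((n : ℝ) * Δτ) • Λ)
  have hEA : Commute E A := ((commute_one_add_smul_self Λ (Δτ / 2)).smul_left _).exp_left
  have hΛE : Commute Λ E := ((Commute.refl Λ).smul_right _).exp_right
  have hsum : ∑ k ∈ Ico 1 n, exp ((((n : ℝ) - k) * Δτ) • Λ) *ᵥ Mhat k
      = (E * ∑ k ∈ Ico 1 n, M ^ k) *ᵥ M₀ := by
    simp only [mul_sum, sum_mulVec, hMhat, mulVec_mulVec, ← mul_assoc, sub_mul,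
      exp_sub_smul_mul_exp_smul, E]
  have hpow : A * M ^ n = (1 - (Δτ / 2) • Λ) - Δτ • (Λ * ∑ k ∈ Ico 1 n, M ^ k) := by
    rw [hM]; exact one_add_half_smul_mul_pow hinv hn
  have key : E * M ^ n =
      A⁻¹ * (E * (1 - (Δτ / 2) • Λ) - Δτ • (Λ * (E * ∑ k ∈ Ico 1 n, M ^ k))) :=
    calc E * M ^ n = A⁻¹ * (A * (E * M ^ n)) :=
          (nonsing_inv_mul_cancel_left _ _ ((isUnit_iff_isUnit_det A).mp hinv)).symm
      _ = A⁻¹ * (E * (A * M ^ n)) := by rw [← mul_assoc A, ← hEA.eq, mul_assoc]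
      _ = _ := by rw [hpow, mul_sub, mul_smul_comm, ← mul_assoc E Λ, ← hΛE.eq, mul_assoc]
  rw [hsum, hMhat, key, mulVec_mulVec, ← smul_mulVec, ← sub_mulVec, mulVec_mulVec]

/-- The sequence `M̂ₙ = exp (n Δτ Λ) (M Λ)^n M̂₀`, where
`M Λ = I - Δτ Λ (I + (Δτ/2) Λ)⁻¹`, satisfies the discretized Volterra memory equation
(the trapezoidal-rule discretization of the Mori–Zwanzig memory kernel equation):
for every `n ≥ 1`,
`M̂ₙ = (I + (Δτ/2) Λ)⁻¹ (exp (n Δτ Λ) (I - (Δτ/2) Λ) M̂₀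
        - Δτ Λ ∑_{k=1}^{n-1} exp ((n - k) Δτ Λ) M̂ₖ)`. -/
theorem explicit_sequence_satisfies_discretized_volterra {d : ℕ}
    (Λ : Matrix (Fin d) (Fin d) ℝ) (Δτ : ℝ) (hΔτ : 0 < Δτ)
    (hinv : IsUnit ((1 : Matrix (Fin d) (Fin d) ℝ) + (Δτ / 2) • Λ))
    (M : Matrix (Fin d) (Fin d) ℝ)
    (hM : M = (1 : Matrix (Fin d) (Fin d) ℝ) -
        Δτ • (Λ * ((1 : Matrix (Fin d) (Fin d) ℝ) + (Δτ / 2) • Λ)⁻¹))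
    (M₀ : Fin d → ℝ) (Mhat : ℕ → Fin d → ℝ)
    (hMhat : ∀ n : ℕ,
      Mhat n = (NormedSpace.exp (((n : ℝ) * Δτ) • Λ) * M ^ n).mulVec M₀) :
    ∀ n : ℕ, 1 ≤ n →
      Mhat n =
        (((1 : Matrix (Fin d) (Fin d) ℝ) + (Δτ / 2) • Λ)⁻¹).mulVec
          ((NormedSpace.exp (((n : ℝ) * Δτ) • Λ) *
              ((1 : Matrix (Fin d) (Fin d) ℝ) - (Δτ / 2) • Λ)).mulVec M₀ -
            Δτ • Λ.mulVec
              (∑ k ∈ Finset.Ico 1 n,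
                (NormedSpace.exp ((((n : ℝ) - (k : ℝ)) * Δτ) • Λ)).mulVec (Mhat k))) :=
  explicit_sequence_satisfies_discretized_volterra_general Λ Δτ hinv M hM M₀ Mhat hMhat
end

section
/- Let Λ be a real n×n matrix and Δτ > 0 a step size such that I + (Δτ/2)Λ is invertible. If a sequence of vectors (M̂_n)_{n≥0} in ℝⁿ satisfies the discretized Volterra memory equation M̂_n = (I + (Δτ/2)Λ)⁻¹·( exp(n·Δτ·Λ)·(I − (Δτ/2)Λ)·M̂₀ − Δτ·Λ·Σ_{k=1}^{n−1} exp((n−k)·Δτ·Λ)·M̂_k ) for every integer n ≥ 1, then it satisfies the recurrence M̂_n = exp(Δτ·Λ)·M(Λ)·M̂_{n−1} for every n ≥ 1. -/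
/-!
Write `A = I + (Δτ/2)Λ`, `B = I - (Δτ/2)Λ` and `Rₙ` for the bracket on the right of the
Volterra equation, so that `A M̂ₙ = Rₙ` for `n ≥ 1`. By `exp((a + b)Λ) = exp(aΛ) exp(bΛ)` the memory
sum satisfies `Sₙ₊₁ = exp(ΔτΛ)(Sₙ + M̂ₙ)`, hence `Rₙ₊₁ = exp(ΔτΛ)(Rₙ - ΔτΛ M̂ₙ) = exp(ΔτΛ) B M̂ₙ`
(directly for `n = 0`). So `A M̂ₙ₊₁ = exp(ΔτΛ) B M̂ₙ`, and since `A⁻¹` commutes with `exp(ΔτΛ)` and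
`A⁻¹B = I - ΔτΛA⁻¹ = M`, the recurrence follows.
-/

open Finset

namespace Matrix

variable {m 𝕂 : Type*} [Fintype m] [DecidableEq m] [RCLike 𝕂]

theorem exp_add_smul (Λ : Matrix m m 𝕂) (a b : 𝕂) :
    NormedSpace.exp ((a + b) • Λ) = NormedSpace.exp (a • Λ) * NormedSpace.exp (b • Λ) := by
  rw [add_smul]
  exact exp_add_of_commute _ _ (((Commute.refl Λ).smul_left a).smul_right b)

theorem commute_one_add_smul_inv (Λ : Matrix m m 𝕂) (s : 𝕂) : Commute Λ (1 + s • Λ)⁻¹ := by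
  rw [← zpow_neg_one]
  exact Matrix.Commute.zpow_right
    ((Commute.one_right Λ).add_right ((Commute.refl Λ).smul_right s)) _

theorem one_add_smul_inv_mul_one_sub_smul (Λ : Matrix m m 𝕂) (Δτ : 𝕂)
    (h : IsUnit (1 + (Δτ / 2) • Λ)) :
    (1 + (Δτ / 2) • Λ)⁻¹ * (1 - (Δτ / 2) • Λ) = 1 - Δτ • (Λ * (1 + (Δτ / 2) • Λ)⁻¹) := by
  have hB : 1 - (Δτ / 2) • Λ = (1 + (Δτ / 2) • Λ) - Δτ • Λ := by module
  rw [hB, mul_sub, nonsing_inv_mul _ ((isUnit_iff_isUnit_det _).mp h), Algebra.mul_smul_comm,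
    (commute_one_add_smul_inv Λ (Δτ / 2)).eq]

end Matrix

open Matrix

section Volterra

variable {m 𝕂 : Type*} [Fintype m] [DecidableEq m] [RCLike 𝕂]
variable (Λ : Matrix m m 𝕂) (Δτ : 𝕂) (x : ℕ → m → 𝕂)

noncomputable def volterraMemorySum (n : ℕ) : m → 𝕂 :=
  ∑ k ∈ Ico 1 n, NormedSpace.exp ((((n : 𝕂) - k) * Δτ) • Λ) *ᵥ x k

theorem volterraMemorySum_succ {n : ℕ} (hn : 1 ≤ n) :
    volterraMemorySum Λ Δτ x (n + 1) =
      NormedSpace.exp (Δτ • Λ) *ᵥ (volterraMemorySum Λ Δτ x n + x n) := by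
  have hshift : ∀ k : ℕ, (((n + 1 : ℕ) : 𝕂) - k) * Δτ = Δτ + ((n : 𝕂) - k) * Δτ := by
    intro k; push_cast; ring
  simp only [volterraMemorySum, sum_Ico_succ_top hn, mulVec_add, mulVec_sum, hshift, exp_add_smul,
    mulVec_mulVec, sub_self, zero_mul, zero_smul, NormedSpace.exp_zero, mul_one]

noncomputable def volterraRhs (n : ℕ) : m → 𝕂 :=
  (NormedSpace.exp (((n : 𝕂) * Δτ) • Λ) * (1 - (Δτ / 2) • Λ)) *ᵥ x 0 -
    Δτ • Λ *ᵥ volterraMemorySum Λ Δτ x n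

theorem volterraRhs_one :
    volterraRhs Λ Δτ x 1 = (NormedSpace.exp (Δτ • Λ) * (1 - (Δτ / 2) • Λ)) *ᵥ x 0 := by
  simp [volterraRhs, volterraMemorySum]

theorem volterraRhs_succ {n : ℕ} (hn : 1 ≤ n) :
    volterraRhs Λ Δτ x (n + 1) =
      NormedSpace.exp (Δτ • Λ) *ᵥ (volterraRhs Λ Δτ x n - Δτ • Λ *ᵥ x n) := by
  have hE : Commute Λ (NormedSpace.exp (Δτ • Λ)) := ((Commute.refl Λ).smul_right Δτ).exp_right
  have hn' : (((n + 1 : ℕ) : 𝕂) * Δτ) = Δτ + n * Δτ := by push_cast; ring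
  rw [volterraRhs, volterraRhs, volterraMemorySum_succ Λ Δτ x hn, hn', exp_add_smul]
  simp only [mulVec_sub, mulVec_add, mulVec_smul, smul_add, mulVec_mulVec, hE.eq, mul_assoc]
  abel

theorem mulVec_succ_of_volterra
    (hx : ∀ n, 1 ≤ n → (1 + (Δτ / 2) • Λ) *ᵥ x n = volterraRhs Λ Δτ x n) (n : ℕ) :
    (1 + (Δτ / 2) • Λ) *ᵥ x (n + 1) =
      (NormedSpace.exp (Δτ • Λ) * (1 - (Δτ / 2) • Λ)) *ᵥ x n := by
  rw [hx (n + 1) n.succ_pos]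
  rcases n with _ | n
  · exact volterraRhs_one Λ Δτ x
  · have hB : 1 - (Δτ / 2) • Λ = (1 + (Δτ / 2) • Λ) - Δτ • Λ := by module
    rw [volterraRhs_succ Λ Δτ x n.succ_pos, ← hx (n + 1) n.succ_pos, ← mulVec_mulVec, hB,
      sub_mulVec, smul_mulVec]

end Volterra

theorem discretized_volterra_implies_recurrence_general {d : ℕ}
    (Λ : Matrix (Fin d) (Fin d) ℝ) (Δτ : ℝ)
    (hinv : IsUnit ((1 : Matrix (Fin d) (Fin d) ℝ) + (Δτ / 2) • Λ))
    (M : Matrix (Fin d) (Fin d) ℝ)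
    (hM : M = (1 : Matrix (Fin d) (Fin d) ℝ) -
        Δτ • (Λ * ((1 : Matrix (Fin d) (Fin d) ℝ) + (Δτ / 2) • Λ)⁻¹))
    (Mhat : ℕ → Fin d → ℝ)
    (hMhat : ∀ n : ℕ, 1 ≤ n →
      Mhat n =
        (((1 : Matrix (Fin d) (Fin d) ℝ) + (Δτ / 2) • Λ)⁻¹).mulVec
          ((NormedSpace.exp (((n : ℝ) * Δτ) • Λ) *
              ((1 : Matrix (Fin d) (Fin d) ℝ) - (Δτ / 2) • Λ)).mulVec (Mhat 0) -
            Δτ • Λ.mulVec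
              (∑ k ∈ Finset.Ico 1 n,
                (NormedSpace.exp ((((n : ℝ) - (k : ℝ)) * Δτ) • Λ)).mulVec (Mhat k)))) :
    ∀ n : ℕ, 1 ≤ n →
      Mhat n = (NormedSpace.exp (Δτ • Λ) * M).mulVec (Mhat (n - 1)) := by
  intro n hn
  obtain ⟨n, rfl⟩ := Nat.exists_eq_add_of_le' hn
  have hdet : IsUnit (1 + (Δτ / 2) • Λ).det := (isUnit_iff_isUnit_det _).mp hinv
  have hvolterra : ∀ n, 1 ≤ n → (1 + (Δτ / 2) • Λ) *ᵥ Mhat n = volterraRhs Λ Δτ Mhat n := by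
    intro n hn
    rw [hMhat n hn, mulVec_mulVec, mul_nonsing_inv _ hdet, one_mulVec]
    rfl
  have hcomm : Commute (1 + (Δτ / 2) • Λ)⁻¹ (NormedSpace.exp (Δτ • Λ)) :=
    ((commute_one_add_smul_inv Λ _).symm.smul_right Δτ).exp_right
  calc Mhat (n + 1)
      = (1 + (Δτ / 2) • Λ)⁻¹ *ᵥ ((1 + (Δτ / 2) • Λ) *ᵥ Mhat (n + 1)) := by
        rw [mulVec_mulVec, nonsing_inv_mul _ hdet, one_mulVec]
    _ = ((1 + (Δτ / 2) • Λ)⁻¹ * (NormedSpace.exp (Δτ • Λ) * (1 - (Δτ / 2) • Λ))) *ᵥ Mhat n := by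
        rw [mulVec_succ_of_volterra Λ Δτ Mhat hvolterra, mulVec_mulVec]
    _ = (NormedSpace.exp (Δτ • Λ) * M).mulVec (Mhat (n + 1 - 1)) := by
        rw [← mul_assoc, hcomm.eq, mul_assoc, one_add_smul_inv_mul_one_sub_smul Λ Δτ hinv, hM,
          Nat.add_sub_cancel]

/-- If a sequence of vectors `(M̂ₙ)` satisfies the discretized Volterra memory equation
`M̂ₙ = (I + (Δτ/2) Λ)⁻¹ (exp (n Δτ Λ) (I - (Δτ/2) Λ) M̂₀
        - Δτ Λ ∑_{k=1}^{n-1} exp ((n - k) Δτ Λ) M̂ₖ)` for every `n ≥ 1`, then it satisfies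
the recurrence `M̂ₙ = exp (Δτ Λ) (M Λ) M̂_{n-1}` for every `n ≥ 1`, where
`M Λ = I - Δτ Λ (I + (Δτ/2) Λ)⁻¹`. -/
theorem discretized_volterra_implies_recurrence {d : ℕ}
    (Λ : Matrix (Fin d) (Fin d) ℝ) (Δτ : ℝ) (hΔτ : 0 < Δτ)
    (hinv : IsUnit ((1 : Matrix (Fin d) (Fin d) ℝ) + (Δτ / 2) • Λ))
    (M : Matrix (Fin d) (Fin d) ℝ)
    (hM : M = (1 : Matrix (Fin d) (Fin d) ℝ) -
        Δτ • (Λ * ((1 : Matrix (Fin d) (Fin d) ℝ) + (Δτ / 2) • Λ)⁻¹))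
    (Mhat : ℕ → Fin d → ℝ)
    (hMhat : ∀ n : ℕ, 1 ≤ n →
      Mhat n =
        (((1 : Matrix (Fin d) (Fin d) ℝ) + (Δτ / 2) • Λ)⁻¹).mulVec
          ((NormedSpace.exp (((n : ℝ) * Δτ) • Λ) *
              ((1 : Matrix (Fin d) (Fin d) ℝ) - (Δτ / 2) • Λ)).mulVec (Mhat 0) -
            Δτ • Λ.mulVec
              (∑ k ∈ Finset.Ico 1 n,
                (NormedSpace.exp ((((n : ℝ) - (k : ℝ)) * Δτ) • Λ)).mulVec (Mhat k)))) :
    ∀ n : ℕ, 1 ≤ n →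
      Mhat n = (NormedSpace.exp (Δτ • Λ) * M).mulVec (Mhat (n - 1)) :=
  discretized_volterra_implies_recurrence_general Λ Δτ hinv M hM Mhat hMhat
end
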